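/- Let Γ be an n×n real symmetric positive definite matrix and let W₂ be an n×m real matrix with orthonormal columns (i.e. W₂ᵀW₂ = Iₘ). Set P₂ = W₂W₂ᵀ. Then the matrix M = W₂ (W₂ᵀ Γ W₂)⁻¹ W₂ᵀ is the Moore–Penrose pseudoinverse of A = P₂ Γ P₂; that is, A M A = A, M A M = M, (A M)ᵀ = A M, and (M A)ᵀ = M A. (Here W₂ᵀ Γ W₂ is invertible since Γ is positive definite and W₂ has full column rank.) -/

import Mathlib

open Matrix

theorem pseudoinverse_of_projected_covariance
    (n m : ℕ) (Γ : Matrix (Fin n) (Fin n) ℝ) (hΓ : Γ.PosDef)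
    (W₂ : Matrix (Fin n) (Fin m) ℝ) (hW : W₂ᵀ * W₂ = 1)
    (P₂ : Matrix (Fin n) (Fin n) ℝ) (hP : P₂ = W₂ * W₂ᵀ)
    (A M : Matrix (Fin n) (Fin n) ℝ)
    (hA : A = P₂ * Γ * P₂)
    (hM : M = W₂ * (W₂ᵀ * Γ * W₂)⁻¹ * W₂ᵀ) :
    A * M * A = A ∧ M * A * M = M ∧ (A * M)ᵀ = A * M ∧ (M * A)ᵀ = M * A := by
  set B := W₂ᵀ * Γ * W₂ with hB
  have hBpd : B.PosDef := by
    refine Matrix.PosDef.of_dotProduct_mulVec_pos ?_ ?_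
    · have : Bᵀ = B := by
        rw [hB, transpose_mul, transpose_mul, transpose_transpose]
        have : Γᵀ = Γ := hΓ.isHermitian
        rw [this, Matrix.mul_assoc]
      simpa [Matrix.IsHermitian] using this
    · intro x hx
      have hWx : W₂.mulVec x ≠ 0 := by
        intro h
        apply hx
        have := congrArg (W₂ᵀ.mulVec) h
        rwa [Matrix.mulVec_mulVec, hW, Matrix.one_mulVec, Matrix.mulVec_zero] at this
      have := hΓ.dotProduct_mulVec_pos hWx
      simpa [hB, Matrix.mulVec_mulVec, Matrix.dotProduct_mulVec,
        Matrix.vecMul_mulVec, Matrix.vecMul_transpose, Matrix.mul_assoc] using this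
  have hBinv : IsUnit B.det := isUnit_iff_ne_zero.mpr hBpd.det_pos.ne'
  have hBB : B * B⁻¹ = 1 := Matrix.mul_nonsing_inv B hBinv
  have hBB' : B⁻¹ * B = 1 := Matrix.nonsing_inv_mul B hBinv
  have hA' : A = W₂ * B * W₂ᵀ := by
    rw [hA, hP, hB]
    simp only [Matrix.mul_assoc]
  have hAM : A * M = W₂ * W₂ᵀ := by
    rw [hA', hM]
    simp only [Matrix.mul_assoc]
    rw [← Matrix.mul_assoc W₂ᵀ W₂, hW, Matrix.one_mul, ← Matrix.mul_assoc B, hBB,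
      Matrix.one_mul]
  have hMA : M * A = W₂ * W₂ᵀ := by
    rw [hA', hM]
    simp only [Matrix.mul_assoc]
    rw [← Matrix.mul_assoc W₂ᵀ W₂, hW, Matrix.one_mul, ← Matrix.mul_assoc B⁻¹ B, hBB',
      Matrix.one_mul]
  refine ⟨?_, ?_, ?_, ?_⟩
  · rw [hAM, hA']
    simp only [Matrix.mul_assoc]
    rw [← Matrix.mul_assoc W₂ᵀ W₂, hW, Matrix.one_mul]
  · rw [hMA, hM]
    simp only [Matrix.mul_assoc]
    rw [← Matrix.mul_assoc W₂ᵀ W₂, hW, Matrix.one_mul]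
  · rw [hAM]; simp [Matrix.transpose_mul]
  · rw [hMA]; simp [Matrix.transpose_mul]
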